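/- Let 𝒢=(G,w) be a positive-weighted graph whose vertex set contains the distinct vertices 1,2,3,4, with all four vertices in a common connected component. For i ∈ [4] write D_{î} = D_{[4]∖{i}}(𝒢). Then for all distinct i, j, k ∈ [4] one has the strict inequality D_{î} < D_{k̂} + D_{ĵ}. -/

import Mathlib

/-!
Let `l` be the fourth vertex and take optimal connected subgraphs `R_k ⊇ {i, j, l}` and
`R_j ⊇ {i, k, l}`. Inside `R_j`, the vertex `k` is joined to `i` or to `l` by a connected subgraph
`H` missing some edge of `R_j`, so `w(H) < w(R_j)` because weights are positive. Then `R_k ⊔ H`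
is connected and contains `{j, k, l}`, whence `D_î ≤ w(R_k) + w(H) < D_k̂ + D_ĵ`.
-/

open SimpleGraph Finset

noncomputable def subgraphWeight {V : Type} [Fintype V] {G : SimpleGraph V}
    (w : Sym2 V → ℝ) (R : G.Subgraph) : ℝ :=
  ∑ e ∈ (Set.toFinite R.edgeSet).toFinset, w e

noncomputable def graphDist {V : Type} [Fintype V] (G : SimpleGraph V)
    (w : Sym2 V → ℝ) (I : Set V) : ℝ :=
  sInf { x : ℝ | ∃ R : G.Subgraph, R.Connected ∧ I ⊆ R.verts ∧ subgraphWeight w R = x }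

def PosWeighted {V : Type} (G : SimpleGraph V) (w : Sym2 V → ℝ) : Prop :=
  ∀ e ∈ G.edgeSet, 0 < w e

namespace SimpleGraph

variable {V : Type} {G : SimpleGraph V} {u v x : V}

lemma Walk.IsTrail.edgeSet_dropUntil_ssubset [DecidableEq V] {p : G.Walk u x} (hp : p.IsTrail)
    (hv : v ∈ p.support) (huv : u ≠ v) :
    (p.dropUntil v hv).edgeSet ⊂ p.edgeSet := by
  obtain ⟨e, he⟩ := List.exists_mem_of_ne_nil _
    (mt Walk.edges_eq_nil.1 (Walk.not_nil_of_ne (p := p.takeUntil v hv) huv))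
  refine (Set.ssubset_iff_of_subset fun e he => p.edges_dropUntil_subset_edges hv he).2
    ⟨e, p.edges_takeUntil_subset_edges hv he, ?_⟩
  exact hp.disjoint_edges_takeUntil_dropUntil hv he

lemma Walk.edgeSet_ssubset_of_notMem_support {R : G.Subgraph} (hR : R.Connected)
    {p : G.Walk u x} (hpR : p.toSubgraph ≤ R) (hv : v ∈ R.verts) (hvx : v ≠ x)
    (hvp : v ∉ p.support) : p.toSubgraph.edgeSet ⊂ R.edgeSet := by
  have : Nontrivial R.verts :=
    ⟨⟨⟨v, hv⟩, ⟨x, hpR.1 p.end_mem_verts_toSubgraph⟩, fun h => hvx (congrArg Subtype.val h)⟩⟩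
  obtain ⟨y, hvy⟩ := hR.preconnected.exists_adj_of_nontrivial ⟨v, hv⟩
  refine (Set.ssubset_iff_of_subset (Subgraph.edgeSet_mono hpR)).2 ⟨s(v, y), hvy, ?_⟩
  rw [Walk.edgeSet_toSubgraph]
  exact fun h => hvp (p.fst_mem_support_of_mem_edges h)

/-- Follow a path from `u` to `x` in `R`: if it meets `v`, its part from `v` on misses its first
edge; otherwise it misses every edge of `R` at `v`. -/
theorem Subgraph.Connected.exists_connected_edgeSet_ssubset {R : G.Subgraph} (hR : R.Connected)
    (hu : u ∈ R.verts) (hv : v ∈ R.verts) (hx : x ∈ R.verts) (huv : u ≠ v) (hvx : v ≠ x) :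
    ∃ H : G.Subgraph, H.Connected ∧ (u ∈ H.verts ∨ v ∈ H.verts) ∧ x ∈ H.verts ∧
      H.edgeSet ⊂ R.edgeSet := by
  classical
  obtain ⟨p, hpR⟩ :=
    (Subgraph.preconnected_iff_forall_exists_walk_subgraph R).1 hR.preconnected hu hx
  have hqR : p.bypass.toSubgraph ≤ R := Walk.toSubgraph_bypass_le_toSubgraph.trans hpR
  by_cases hvq : v ∈ p.bypass.support
  · refine ⟨(p.bypass.dropUntil v hvq).toSubgraph, Walk.toSubgraph_connected _,
      Or.inr (Walk.start_mem_verts_toSubgraph _), Walk.end_mem_verts_toSubgraph _, ?_⟩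
    rw [Walk.edgeSet_toSubgraph]
    exact (p.bypass_isPath.isTrail.edgeSet_dropUntil_ssubset hvq huv).trans_subset
      (Walk.edgeSet_toSubgraph p.bypass ▸ Subgraph.edgeSet_mono hqR)
  · exact ⟨p.bypass.toSubgraph, Walk.toSubgraph_connected _,
      Or.inl (Walk.start_mem_verts_toSubgraph _), Walk.end_mem_verts_toSubgraph _,
      Walk.edgeSet_ssubset_of_notMem_support hR hqR hv hvx hvq⟩

end SimpleGraph

section Weight

variable {V : Type} [Fintype V] {G : SimpleGraph V} {w : Sym2 V → ℝ}

lemma subgraphWeight_sup_le (hw : PosWeighted G w) (H K : G.Subgraph) :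
    subgraphWeight w (H ⊔ K) ≤ subgraphWeight w H + subgraphWeight w K := by
  classical
  have hinter : 0 ≤ ∑ e ∈ (Set.toFinite H.edgeSet).toFinset ∩ (Set.toFinite K.edgeSet).toFinset,
      w e :=
    Finset.sum_nonneg fun e he => (hw e (H.edgeSet_subset (by simp_all))).le
  have hunion : (Set.toFinite (H ⊔ K).edgeSet).toFinset =
      (Set.toFinite H.edgeSet).toFinset ∪ (Set.toFinite K.edgeSet).toFinset := by
    ext e; simp [Subgraph.edgeSet_sup]
  unfold subgraphWeight
  rw [hunion]
  linarith [Finset.sum_union_inter (f := w) (s₁ := (Set.toFinite H.edgeSet).toFinset)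
    (s₂ := (Set.toFinite K.edgeSet).toFinset)]

lemma subgraphWeight_lt_of_edgeSet_ssubset (hw : PosWeighted G w) {H K : G.Subgraph}
    (h : H.edgeSet ⊂ K.edgeSet) : subgraphWeight w H < subgraphWeight w K := by
  obtain ⟨e, heK, heH⟩ := Set.exists_of_ssubset h
  exact Finset.sum_lt_sum_of_subset (Set.Finite.toFinset_subset_toFinset.2 h.subset)
    (by simpa using heK) (by simpa using heH) (hw e (K.edgeSet_subset heK))
    fun f hf _ => (hw f (K.edgeSet_subset (by simpa using hf))).le

lemma finite_setOf_subgraphWeight_connected (I : Set V) :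
    {x : ℝ | ∃ R : G.Subgraph, R.Connected ∧ I ⊆ R.verts ∧ subgraphWeight w R = x}.Finite :=
  (Set.finite_range (subgraphWeight w : G.Subgraph → ℝ)).subset <| by
    rintro _ ⟨R, -, -, rfl⟩
    exact ⟨R, rfl⟩

lemma graphDist_le {I : Set V} {R : G.Subgraph} (hR : R.Connected) (hI : I ⊆ R.verts) :
    graphDist G w I ≤ subgraphWeight w R :=
  csInf_le (finite_setOf_subgraphWeight_connected I).bddBelow ⟨R, hR, hI, rfl⟩

lemma exists_subgraphWeight_eq_graphDist {I : Set V} {R : G.Subgraph} (hR : R.Connected)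
    (hI : I ⊆ R.verts) :
    ∃ R' : G.Subgraph, R'.Connected ∧ I ⊆ R'.verts ∧ subgraphWeight w R' = graphDist G w I :=
  have hne :
      {x : ℝ | ∃ R : G.Subgraph, R.Connected ∧ I ⊆ R.verts ∧ subgraphWeight w R = x}.Nonempty :=
    ⟨_, R, hR, hI, rfl⟩
  hne.csInf_mem (finite_setOf_subgraphWeight_connected I)

end Weight

/-- Theorem 4.4, necessity (ii): for four distinct vertices `1,2,3,4` in a common
connected component of a positive-weighted graph, `D_î < D_k̂ + D_ĵ`. -/
theorem four_vertices_strict_triangle {V : Type} [Fintype V]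
    (G : SimpleGraph V) (w : Sym2 V → ℝ) (hw : PosWeighted G w)
    (ι : Fin 4 → V) (hι : Function.Injective ι)
    (hconn : ∀ i j : Fin 4, G.Reachable (ι i) (ι j)) :
    ∀ i j k : Fin 4, i ≠ j → i ≠ k → j ≠ k →
      graphDist G w (ι '' {m | m ≠ i}) <
        graphDist G w (ι '' {m | m ≠ k}) + graphDist G w (ι '' {m | m ≠ j}) := by
  intro i j k hij hik hjk
  obtain ⟨l, hli, hlj, hlk⟩ : ∃ l : Fin 4, l ≠ i ∧ l ≠ j ∧ l ≠ k := by revert i j k; decide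
  set C := G.connectedComponentMk (ι i)
  have hC (I : Set (Fin 4)) : ι '' I ⊆ C.toSubgraph.verts := by
    rintro _ ⟨m, -, rfl⟩
    exact ConnectedComponent.sound (hconn m i)
  obtain ⟨Rk, hRk, hIk, hwk⟩ :=
    exists_subgraphWeight_eq_graphDist (w := w) C.connected_toSubgraph (hC {m | m ≠ k})
  obtain ⟨Rj, hRj, hIj, hwj⟩ :=
    exists_subgraphWeight_eq_graphDist (w := w) C.connected_toSubgraph (hC {m | m ≠ j})
  obtain ⟨H, hH, hliH, hkH, hHRj⟩ := hRj.exists_connected_edgeSet_ssubset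
    (hIj ⟨l, hlj, rfl⟩) (hIj ⟨i, hij, rfl⟩) (hIj ⟨k, hjk.symm, rfl⟩) (hι.ne hli) (hι.ne hik)
  have hmeet : (Rk ⊓ H).verts.Nonempty := by
    rcases hliH with h | h
    exacts [⟨_, hIk ⟨l, hlk, rfl⟩, h⟩, ⟨_, hIk ⟨i, hik, rfl⟩, h⟩]
  have hcover : ι '' {m | m ≠ i} ⊆ (Rk ⊔ H).verts := by
    rintro _ ⟨m, -, rfl⟩
    by_cases hmk : m = k
    exacts [Or.inr (hmk ▸ hkH), Or.inl (hIk ⟨m, hmk, rfl⟩)]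
  calc graphDist G w (ι '' {m | m ≠ i})
      ≤ subgraphWeight w (Rk ⊔ H) :=
        graphDist_le (Subgraph.connected_sup hRk.preconnected hH.preconnected hmeet) hcover
    _ ≤ subgraphWeight w Rk + subgraphWeight w H := subgraphWeight_sup_le hw Rk H
    _ < subgraphWeight w Rk + subgraphWeight w Rj := by
        gcongr; exact subgraphWeight_lt_of_edgeSet_ssubset hw hHRj
    _ = _ := by rw [hwk, hwj]
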